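/- Under the multiplicity context, for every n ∈ ℕ there exist constants ε_n, C_n, D_n > 0, which can be chosen depending only on δ_{low,0},…,δ_{low,n} and the Gram matrix of the vectors {v_{k,l} : 0 ≤ k ≤ n, 1 ≤ l ≤ m(k)}, such that for every ε ∈ [0, ε_n] and every coefficient system fast-decaying with parameters (ε, (δ_{low,n}), (ā_n)), all eigenvalues in the n-th block of K satisfy λ_{n,l} ∈ [C_n·ā_n, D_n·ā_n] for l = 1,…,m(n). -/

import Mathlib

/-!
Let `N = ∑_{k<n} m(k) + l` be the position of `λ_{n,l}` and let `u` be the vectors of blocks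
`0, …, n`, with Gram matrix `G`. For `x ∈ span u` and `y = (⟪uⱼ, x⟫)ⱼ` one has
`‖x‖² = y ⬝ G⁻¹ y ≤ (∑ |G⁻¹ᵢⱼ|) ‖y‖²`. Testing min-max on the span of the first `N + 1` vectors
therefore gives `λ_{n,l} ≥ ā_n δ / ∑ |G⁻¹ᵢⱼ|`, as all coefficients of blocks `≤ n` are `≥ ā_n δ`.

Conversely, every `(N+1)`-dimensional subspace contains a unit vector orthogonal to the first `N`
vectors, which sees only coefficients of blocks `k ≥ n`. For `ε ≤ 1/2` the sequence `ā_k 2^k` is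
antitone, so these coefficients are at most `ā_n 2^n 2^{-k}`, and `∑_k m(k) 2^{-k} < ∞` because
`m` grows polynomially.
-/

open scoped InnerProductSpace

/-- The `(n+1)`-th largest eigenvalue of a (positive compact self-adjoint) operator,
defined via the Courant–Fischer min-max principle. -/
noncomputable def nthEig {H : Type*} [NormedAddCommGroup H] [InnerProductSpace ℝ H]
    (K : H → H) (n : ℕ) : ℝ :=
  ⨆ V : {V : Submodule ℝ H // Module.finrank ℝ V = n + 1},
    ⨅ x : {x : H // x ∈ V.1 ∧ ‖x‖ = 1}, ⟪x.1, K x.1⟫_ℝ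

open Finset Matrix Module

section MinMax

variable {H : Type*} [NormedAddCommGroup H] [InnerProductSpace ℝ H] {K : H → H} {N : ℕ} {c : ℝ}

lemma Submodule.exists_mem_norm_eq_one {V : Submodule ℝ H} (hV : 0 < finrank ℝ V) :
    ∃ x ∈ V, ‖x‖ = 1 := by
  have := Module.nontrivial_of_finrank_pos hV
  obtain ⟨x, hx⟩ := exists_norm_eq V zero_le_one
  exact ⟨x, x.2, hx⟩

lemma Submodule.exists_mem_norm_eq_one_forall_inner_eq_zero {ι : Type*} [Fintype ι] (w : ι → H)
    {V : Submodule ℝ H} (hV : Fintype.card ι < finrank ℝ V) :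
    ∃ x ∈ V, ‖x‖ = 1 ∧ ∀ i, ⟪w i, x⟫_ℝ = 0 := by
  have : FiniteDimensional ℝ V := Module.finite_of_finrank_pos (by omega)
  let f : V →ₗ[ℝ] ι → ℝ := (LinearMap.pi fun i => innerₛₗ ℝ (w i)).comp V.subtype
  obtain ⟨y, hy, hy0⟩ := (Submodule.ne_bot_iff _).1
    (LinearMap.ker_ne_bot_of_finrank_lt (f := f) (by simpa using hV))
  have hy0' : (y : H) ≠ 0 := by simpa using hy0
  refine ⟨‖(y : H)‖⁻¹ • (y : H), V.smul_mem _ y.2, norm_smul_inv_norm hy0', fun i => ?_⟩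
  rw [real_inner_smul_right, show ⟪w i, (y : H)⟫_ℝ = 0 from congr_fun hy i, mul_zero]

lemma le_nthEig {M : ℝ} (hpos : ∀ x, 0 ≤ ⟪x, K x⟫_ℝ) (hM : ∀ x, ‖x‖ = 1 → ⟪x, K x⟫_ℝ ≤ M)
    {V : Submodule ℝ H} (hV : finrank ℝ V = N + 1)
    (hc : ∀ x ∈ V, ‖x‖ = 1 → c ≤ ⟪x, K x⟫_ℝ) : c ≤ nthEig K N := by
  have hbdd (W : Submodule ℝ H) :
      BddBelow (Set.range fun x : {x : H // x ∈ W ∧ ‖x‖ = 1} => ⟪x.1, K x.1⟫_ℝ) :=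
    ⟨0, by rintro _ ⟨x, rfl⟩; exact hpos x⟩
  refine le_ciSup_of_le ⟨M, ?_⟩ ⟨V, hV⟩ ?_
  · rintro _ ⟨⟨W, hW⟩, rfl⟩
    obtain ⟨x, hxW, hx⟩ := Submodule.exists_mem_norm_eq_one (V := W) (by rw [hW]; exact N.succ_pos)
    exact ciInf_le_of_le (hbdd W) ⟨x, hxW, hx⟩ (hM x hx)
  · obtain ⟨x, hxV, hx⟩ := Submodule.exists_mem_norm_eq_one (V := V) (by rw [hV]; exact N.succ_pos)
    have : Nonempty {x : H // x ∈ V ∧ ‖x‖ = 1} := ⟨⟨x, hxV, hx⟩⟩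
    exact le_ciInf fun x => hc x.1 x.2.1 x.2.2

lemma nthEig_le (hpos : ∀ x, 0 ≤ ⟪x, K x⟫_ℝ) (hc0 : 0 ≤ c)
    (hc : ∀ V : Submodule ℝ H, finrank ℝ V = N + 1 → ∃ x ∈ V, ‖x‖ = 1 ∧ ⟪x, K x⟫_ℝ ≤ c) :
    nthEig K N ≤ c := by
  refine Real.iSup_le (fun V => ?_) hc0
  obtain ⟨x, hxV, hx, hxc⟩ := hc V.1 V.2
  exact ciInf_le_of_le ⟨0, by rintro _ ⟨y, rfl⟩; exact hpos y⟩ ⟨x, hxV, hx⟩ hxc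

end MinMax

lemma Matrix.dotProduct_mulVec_le {κ : Type*} [Fintype κ] (M : Matrix κ κ ℝ) (y : κ → ℝ) :
    y ⬝ᵥ (M *ᵥ y) ≤ (∑ i, ∑ j, |M i j|) * (y ⬝ᵥ y) := by
  have hsq (i : κ) : y i ^ 2 ≤ y ⬝ᵥ y := by
    simpa [dotProduct, sq] using
      single_le_sum (fun j _ => mul_self_nonneg (y j)) (mem_univ i)
  calc y ⬝ᵥ (M *ᵥ y) = ∑ i, ∑ j, M i j * (y i * y j) := by
        simp only [dotProduct, mulVec, mul_sum]
        exact sum_congr rfl fun i _ => sum_congr rfl fun j _ => by ring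
    _ ≤ ∑ i, ∑ j, |M i j| * (y ⬝ᵥ y) := by
        refine sum_le_sum fun i _ => sum_le_sum fun j _ => ?_
        refine (le_abs_self _).trans ?_
        rw [abs_mul, abs_mul]
        refine mul_le_mul_of_nonneg_left ?_ (abs_nonneg _)
        nlinarith [hsq i, hsq j, sq_abs (y i), sq_abs (y j), abs_nonneg (y i), abs_nonneg (y j),
          sq_nonneg (|y i| - |y j|)]
    _ = (∑ i, ∑ j, |M i j|) * (y ⬝ᵥ y) := by simp only [sum_mul]

section InnerProductSpace

variable {H : Type*} [NormedAddCommGroup H] [InnerProductSpace ℝ H]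

lemma abs_real_inner_le_norm_of_norm_le_one {w : H} (hw : ‖w‖ ≤ 1) (x : H) :
    |⟪w, x⟫_ℝ| ≤ ‖x‖ :=
  (abs_real_inner_le_norm w x).trans (mul_le_of_le_one_left (norm_nonneg x) hw)

lemma real_inner_sq_le_of_norm_le_one {w : H} (hw : ‖w‖ ≤ 1) (x : H) :
    ⟪w, x⟫_ℝ ^ 2 ≤ ‖x‖ ^ 2 :=
  sq_le_sq.2 ((abs_real_inner_le_norm_of_norm_le_one hw x).trans_eq (abs_norm x).symm)

lemma norm_sq_eq_dotProduct_inv_gram_mulVec {κ : Type*} [Fintype κ] [DecidableEq κ] {u : κ → H}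
    (hu : LinearIndependent ℝ u) {x : H} (hx : x ∈ Submodule.span ℝ (Set.range u)) :
    ‖x‖ ^ 2 = (fun i => ⟪u i, x⟫_ℝ) ⬝ᵥ ((gram ℝ u)⁻¹ *ᵥ fun i => ⟪u i, x⟫_ℝ) := by
  obtain ⟨c, rfl⟩ := (Submodule.mem_span_range_iff_exists_fun ℝ).1 hx
  have hy : (fun i => ⟪u i, ∑ j, c j • u j⟫_ℝ) = gram ℝ u *ᵥ c := by
    ext i
    simp [mulVec, dotProduct, inner_sum, real_inner_smul_right, mul_comm]
  have hc : (gram ℝ u)⁻¹ *ᵥ (gram ℝ u *ᵥ c) = c := by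
    rw [mulVec_mulVec, nonsing_inv_mul _ ((isUnit_iff_isUnit_det _).1
      (posDef_gram_of_linearIndependent hu).isUnit), one_mulVec]
  have := star_dotProduct_gram_mulVec (𝕜 := ℝ) u c c
  rw [hy, hc, dotProduct_comm, ← real_inner_self_eq_norm_sq, ← this, star_trivial]

section RankOneSum

variable {ι : Type*}

noncomputable def rankOneSum (a : ι → ℝ) (v : ι → H) (x : H) : H :=
  ∑' i, (a i * ⟪v i, x⟫_ℝ) • v i

variable {a : ι → ℝ} {v : ι → H} (ha : Summable a) (hv : ∀ i, ‖v i‖ ≤ 1)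
include ha hv

lemma summable_mul_inner_sq (x : H) :
    Summable fun i => a i * ⟪v i, x⟫_ℝ ^ 2 :=
  Summable.of_norm_bounded (ha.abs.mul_right (‖x‖ ^ 2)) fun i => by
    rw [Real.norm_eq_abs, abs_mul, abs_of_nonneg (sq_nonneg (⟪v i, x⟫_ℝ))]
    exact mul_le_mul_of_nonneg_left (real_inner_sq_le_of_norm_le_one (hv i) x) (abs_nonneg _)

lemma inner_rankOneSum [CompleteSpace H] (x : H) :
    ⟪x, rankOneSum a v x⟫_ℝ = ∑' i, a i * ⟪v i, x⟫_ℝ ^ 2 := by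
  have hsum : Summable fun i => (a i * ⟪v i, x⟫_ℝ) • v i := by
    refine Summable.of_norm_bounded (ha.abs.mul_right ‖x‖) fun i => ?_
    rw [norm_smul, Real.norm_eq_abs, abs_mul]
    exact mul_le_mul (mul_le_mul_of_nonneg_left (abs_real_inner_le_norm_of_norm_le_one (hv i) x)
      (abs_nonneg _)) (hv i) (norm_nonneg _) (by positivity) |>.trans_eq (mul_one _)
  rw [rankOneSum, ← innerSL_apply_apply ℝ, (innerSL ℝ x).map_tsum hsum]
  refine tsum_congr fun i => ?_
  rw [innerSL_apply_apply, real_inner_smul_right, real_inner_comm]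
  ring

variable [CompleteSpace H] (ha0 : ∀ i, 0 ≤ a i)
include ha0

lemma inner_rankOneSum_nonneg (x : H) : 0 ≤ ⟪x, rankOneSum a v x⟫_ℝ := by
  rw [inner_rankOneSum ha hv]
  exact tsum_nonneg fun i => mul_nonneg (ha0 i) (sq_nonneg _)

lemma inner_rankOneSum_le {x : H} (hx : ‖x‖ = 1) {b : ι → ℝ} (hb : Summable b)
    (hb0 : ∀ i, 0 ≤ b i) (hab : ∀ i, ⟪v i, x⟫_ℝ ≠ 0 → a i ≤ b i) :
    ⟪x, rankOneSum a v x⟫_ℝ ≤ ∑' i, b i := by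
  rw [inner_rankOneSum ha hv]
  refine Summable.tsum_le_tsum (fun i => ?_) (summable_mul_inner_sq ha hv x) hb
  by_cases hi : ⟪v i, x⟫_ℝ = 0
  · simpa [hi] using hb0 i
  · calc a i * ⟪v i, x⟫_ℝ ^ 2 ≤ a i * 1 := by
          refine mul_le_mul_of_nonneg_left ?_ (ha0 i)
          simpa [hx] using real_inner_sq_le_of_norm_le_one (hv i) x
      _ ≤ b i := (mul_one (a i)).trans_le (hab i hi)

lemma le_nthEig_rankOneSum (hli : LinearIndependent ℝ v) {κ : Type*} [Fintype κ] {g : κ → ι}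
    (hg : Function.Injective g) {t : Finset ι} (ht : ∀ i ∈ t, i ∈ Set.range g) {N : ℕ}
    (hcard : #t = N + 1) {α Λ : ℝ} (hα0 : 0 ≤ α) (hα : ∀ j, α ≤ a (g j))
    (hΛ : ∀ x ∈ Submodule.span ℝ (Set.range (v ∘ g)), ‖x‖ ^ 2 ≤ Λ * ∑ j, ⟪v (g j), x⟫_ℝ ^ 2) :
    α / Λ ≤ nthEig (rankOneSum a v) N := by
  refine le_nthEig (inner_rankOneSum_nonneg ha hv ha0)
    (fun x hx => inner_rankOneSum_le ha hv ha0 hx ha ha0 fun _ _ => le_rfl)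
    (V := Submodule.span ℝ (Set.range (v ∘ ((↑) : t → ι)))) ?_ fun x hxV hx => ?_
  · rw [finrank_span_eq_card (hli.comp _ Subtype.val_injective), Fintype.card_coe, hcard]
  have hxg : x ∈ Submodule.span ℝ (Set.range (v ∘ g)) := by
    refine Submodule.span_mono ?_ hxV
    rintro _ ⟨i, rfl⟩
    obtain ⟨j, hj⟩ := ht i i.2
    exact ⟨j, by simp [hj]⟩
  set S := ∑ j, ⟪v (g j), x⟫_ℝ ^ 2
  have hS : 1 ≤ Λ * S := by simpa [hx] using hΛ x hxg
  have hΛ0 : 0 < Λ := by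
    by_contra! h
    nlinarith [show 0 ≤ S by positivity]
  calc α / Λ ≤ α * S := by
        rw [div_le_iff₀ hΛ0]
        nlinarith
    _ = ∑ j, α * ⟪v (g j), x⟫_ℝ ^ 2 := mul_sum _ _ _
    _ ≤ ∑' j, a (g j) * ⟪v (g j), x⟫_ℝ ^ 2 := by
        rw [tsum_fintype]
        exact sum_le_sum fun j _ => mul_le_mul_of_nonneg_right (hα j) (sq_nonneg _)
    _ ≤ ∑' i, a i * ⟪v i, x⟫_ℝ ^ 2 :=
        tsum_comp_le_tsum_of_inj (summable_mul_inner_sq ha hv x)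
          (fun i => mul_nonneg (ha0 i) (sq_nonneg _)) hg
    _ = ⟪x, rankOneSum a v x⟫_ℝ := (inner_rankOneSum ha hv x).symm

lemma nthEig_rankOneSum_le {t : Finset ι} {N : ℕ} (hcard : #t = N) {b : ι → ℝ}
    (hb : Summable b) (hb0 : ∀ i, 0 ≤ b i) (hab : ∀ i ∉ t, a i ≤ b i) :
    nthEig (rankOneSum a v) N ≤ ∑' i, b i := by
  refine nthEig_le (inner_rankOneSum_nonneg ha hv ha0) (tsum_nonneg hb0) fun V hV => ?_
  obtain ⟨x, hxV, hx, hperp⟩ :=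
    V.exists_mem_norm_eq_one_forall_inner_eq_zero (fun i : t => v i) (by simp [hcard, hV])
  exact ⟨x, hxV, hx, inner_rankOneSum_le ha hv ha0 hx hb hb0 fun i hi =>
    hab i fun hit => hi (hperp ⟨i, hit⟩)⟩

end RankOneSum

end InnerProductSpace

lemma summable_mul_geometric_of_abs_le_rpow {f : ℕ → ℝ} {A D r : ℝ}
    (hf : ∀ k : ℕ, 1 ≤ k → |f k| ≤ A * (k : ℝ) ^ D) (hr : ‖r‖ < 1) :
    Summable fun k => f k * r ^ k := by
  have hpow : (fun k : ℕ => f k) =O[Filter.atTop] fun k : ℕ => (k : ℝ) ^ ⌈D⌉₊ := by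
    refine Asymptotics.IsBigO.of_bound |A| (Filter.eventually_atTop.2 ⟨1, fun k hk => ?_⟩)
    have hk1 : (1 : ℝ) ≤ k := by exact_mod_cast hk
    rw [Real.norm_eq_abs, Real.norm_of_nonneg (by positivity : (0 : ℝ) ≤ (k : ℝ) ^ ⌈D⌉₊),
      ← Real.rpow_natCast]
    calc |f k| ≤ A * (k : ℝ) ^ D := hf k hk
      _ ≤ |A| * (k : ℝ) ^ D := mul_le_mul_of_nonneg_right (le_abs_self A) (by positivity)
      _ ≤ |A| * (k : ℝ) ^ (⌈D⌉₊ : ℝ) :=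
        mul_le_mul_of_nonneg_left (Real.rpow_le_rpow_of_exponent_le hk1 (Nat.le_ceil D))
          (abs_nonneg A)
  exact summable_of_isBigO_nat (summable_pow_mul_geometric_of_norm_lt_one ⌈D⌉₊ hr)
    (hpow.mul (Asymptotics.isBigO_refl _ _))

lemma summable_sigma_comp_fst {α : Type*} {β : α → Type*} [∀ x, Fintype (β x)] {f : α → ℝ}
    (hf : ∀ x, 0 ≤ f x) (h : Summable fun x => Fintype.card (β x) * f x) :
    Summable fun i : (x : α) × β x => f i.1 :=
  (summable_sigma_of_nonneg fun i => hf i.1).2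
    ⟨fun _ => Summable.of_finite, by simpa [tsum_fintype] using h⟩

lemma summable_pow_fst_of_le_rpow {m : ℕ → ℕ} {A D : ℝ}
    (hm : ∀ k : ℕ, 1 ≤ k → (m k : ℝ) ≤ A * (k : ℝ) ^ D) {r : ℝ} (hr0 : 0 ≤ r) (hr : r < 1) :
    Summable fun i : (k : ℕ) × Fin (m k) => r ^ i.1 :=
  summable_sigma_comp_fst (fun _ => by positivity) <| by
    simpa using summable_mul_geometric_of_abs_le_rpow (f := fun k => (m k : ℝ))
      (fun k hk => by simpa using hm k hk) (r := r) (by rwa [Real.norm_of_nonneg hr0])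

lemma le_mul_pow_mul_inv_pow_of_le_mul {u : ℕ → ℝ} {ε r : ℝ} (hu : ∀ k, 0 ≤ u k) (hr : 0 < r)
    (hεr : ε * r ≤ 1) (h : ∀ k, u (k + 1) ≤ ε * u k) {k k' : ℕ} (hk : k ≤ k') :
    u k' ≤ u k * r ^ k * r⁻¹ ^ k' := by
  have hanti : Antitone fun k => u k * r ^ k := antitone_nat_of_succ_le fun k => calc
    u (k + 1) * r ^ (k + 1) ≤ ε * u k * r ^ (k + 1) :=
      mul_le_mul_of_nonneg_right (h k) (by positivity)
    _ = ε * r * (u k * r ^ k) := by ring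
    _ ≤ u k * r ^ k := mul_le_of_le_one_left (mul_nonneg (hu k) (by positivity)) hεr
  rw [inv_pow, ← div_eq_mul_inv, le_div_iff₀ (by positivity)]
  exact hanti hk

section BlockPrefix

variable {m : ℕ → ℕ} {n t : ℕ}

/-- The indices of the first `∑ k < n, m k + t` eigenvalues in the block enumeration. -/
def blockPrefix (m : ℕ → ℕ) (n t : ℕ) : Finset ((k : ℕ) × Fin (m k)) :=
  (range (n + 1)).sigma fun k => {j | k < n ∨ (j : ℕ) < t}

lemma mem_blockPrefix {i : (k : ℕ) × Fin (m k)} :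
    i ∈ blockPrefix m n t ↔ i.1 < n ∨ i.1 = n ∧ (i.2 : ℕ) < t := by
  simp only [blockPrefix, mem_sigma, mem_range, mem_filter, mem_univ, true_and]
  omega

lemma card_blockPrefix (ht : t ≤ m n) : #(blockPrefix m n t) = ∑ k ∈ range n, m k + t := by
  rw [blockPrefix, card_sigma, sum_range_succ]
  congr 1
  · refine sum_congr rfl fun k hk => ?_
    simp [mem_range.1 hk]
  · simp [Fin.card_filter_val_lt, ht]

end BlockPrefix

section Blocks

variable {m : ℕ → ℕ} {n : ℕ}

def headIncl (m : ℕ → ℕ) (n : ℕ) : ((k : Fin (n + 1)) × Fin (m k.1)) → (k : ℕ) × Fin (m k) :=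
  Sigma.map Fin.val fun _ => id

lemma headIncl_injective : Function.Injective (headIncl m n) :=
  Fin.val_injective.sigma_map fun _ => Function.injective_id

variable {H : Type*} [NormedAddCommGroup H] [InnerProductSpace ℝ H] [CompleteSpace H]
  {a : (k : ℕ) × Fin (m k) → ℝ} {v : (k : ℕ) × Fin (m k) → H}
  (ha : Summable a) (hv : ∀ i, ‖v i‖ ≤ 1) (ha0 : ∀ i, 0 ≤ a i)
include ha hv ha0

lemma div_le_nthEig_rankOneSum_block (hli : LinearIndependent ℝ v) {α : ℝ} (hα0 : 0 ≤ α)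
    (hα : ∀ i, i.1 ≤ n → α ≤ a i) (l : Fin (m n)) :
    α / (∑ i, ∑ j, |(gram ℝ (v ∘ headIncl m n))⁻¹ i j| + 1)
      ≤ nthEig (rankOneSum a v) (∑ k ∈ range n, m k + l) := by
  refine le_nthEig_rankOneSum ha hv ha0 hli headIncl_injective (t := blockPrefix m n (l + 1))
    (fun i hi => ?_) (card_blockPrefix l.2) hα0 (fun j => hα _ (Nat.lt_succ_iff.1 j.1.2))
    fun x hx => ?_
  · have := mem_blockPrefix.1 hi
    exact ⟨⟨⟨i.1, by omega⟩, i.2⟩, rfl⟩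
  · rw [norm_sq_eq_dotProduct_inv_gram_mulVec (hli.comp _ headIncl_injective) hx]
    refine (dotProduct_mulVec_le _ _).trans
      (mul_le_mul (lt_add_one _).le ?_ (dotProduct_self_star_nonneg _) (by positivity))
    simp [dotProduct, sq]

lemma nthEig_rankOneSum_block_le {b : (k : ℕ) × Fin (m k) → ℝ} (hb : Summable b)
    (hb0 : ∀ i, 0 ≤ b i) (hab : ∀ i, n ≤ i.1 → a i ≤ b i) (l : Fin (m n)) :
    nthEig (rankOneSum a v) (∑ k ∈ range n, m k + l) ≤ ∑' i, b i :=
  nthEig_rankOneSum_le ha hv ha0 (card_blockPrefix l.2.le) hb hb0 fun i hi =>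
    hab i (by rw [mem_blockPrefix] at hi; omega)

end Blocks

/-- **Exponential separation of eigenvalue blocks** (with multiplicity). Given a
polynomially bounded multiplicity function `m`, for every `n` there are constants
`ε_n, C_n, D_n > 0` — depending only on `δ_{low,0..n}` and the Gram matrix of the
vectors `{v_{k,l} : k ≤ n}` — such that for every `ε ∈ [0, ε_n]` and every
coefficient system fast-decaying with parameters `(ε, (δ_{low,n}), (ā_n))`, all
eigenvalues in the `n`-th block of `K = Σ_{k,l} a_{k,l}⟨v_{k,l},·⟩v_{k,l}` satisfy
`λ_{n,l} ∈ [C_n ā_n, D_n ā_n]`. -/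
theorem eigenblock_exponential_separation
    (m : ℕ → ℕ) (hm : ∀ k, 0 < m k)
    (hpoly : ∃ A D : ℝ, 0 < A ∧ 0 < D ∧ ∀ k : ℕ, 1 ≤ k → (m k : ℝ) ≤ A * (k : ℝ) ^ D)
    (n : ℕ) (δhead : Fin (n + 1) → ℝ)
    (G : ((k : Fin (n + 1)) × Fin (m k.1)) → ((k : Fin (n + 1)) × Fin (m k.1)) → ℝ) :
    ∃ εn C D' : ℝ, 0 < εn ∧ 0 < C ∧ 0 < D' ∧
      ∀ (H : Type*) [NormedAddCommGroup H] [InnerProductSpace ℝ H] [CompleteSpace H]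
        [TopologicalSpace.SeparableSpace H],
      ∀ v : ((k : ℕ) × Fin (m k)) → H,
        (∀ i, ‖v i‖ = 1) → LinearIndependent ℝ v →
        (Submodule.span ℝ (Set.range v)).topologicalClosure = ⊤ →
        (∀ i j : (k : Fin (n + 1)) × Fin (m k.1),
          ⟪v ⟨i.1.1, i.2⟩, v ⟨j.1.1, j.2⟩⟫_ℝ = G i j) →
      ∀ δlow : ℕ → ℝ, (∀ k, δlow k ∈ Set.Ioc (0 : ℝ) 1) →
        (∀ k : Fin (n + 1), δlow k.1 = δhead k) →
      ∀ ε : ℝ, ε ∈ Set.Icc 0 εn → ε < 1 →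
      ∀ abar : ℕ → ℝ, (∀ k, 0 < abar k) → (∀ k, abar (k + 1) ≤ ε * abar k) →
      ∀ a : ((k : ℕ) × Fin (m k)) → ℝ,
        (∀ i, a i ∈ Set.Icc (abar i.1 * δlow i.1) (abar i.1)) →
      ∀ l : Fin (m n),
        C * abar n
            ≤ nthEig (fun x : H => ∑' i : (k : ℕ) × Fin (m k), (a i * ⟪v i, x⟫_ℝ) • v i)
                ((∑ k ∈ Finset.range n, m k) + (l : ℕ)) ∧
        nthEig (fun x : H => ∑' i : (k : ℕ) × Fin (m k), (a i * ⟪v i, x⟫_ℝ) • v i)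
              ((∑ k ∈ Finset.range n, m k) + (l : ℕ))
            ≤ D' * abar n := by
  obtain ⟨A, D, -, -, hpb⟩ := hpoly
  have hw := summable_pow_fst_of_le_rpow hpb (r := 2⁻¹) (by norm_num) (by norm_num)
  set δ₀ := univ.inf' univ_nonempty δhead
  -- `δ₀ > 0` under the hypotheses; the fallback `1` only makes `C > 0` unconditional.
  refine ⟨2⁻¹, (if 0 < δ₀ then δ₀ else 1) / (∑ i, ∑ j, |(Matrix.of G)⁻¹ i j| + 1),
    2 ^ n * ∑' i : (k : ℕ) × Fin (m k), (2⁻¹ : ℝ) ^ i.1, by norm_num,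
    div_pos (by split_ifs <;> linarith) (by positivity),
    mul_pos (by positivity) (hw.tsum_pos (fun _ => by positivity) ⟨n, ⟨0, hm n⟩⟩ (by positivity)),
    ?_⟩
  intro H _ _ _ _ v hv hli _ hGram δlow hδ hδhead ε hε _ abar habar hdec a ha l
  have hG : Matrix.of G = gram ℝ (v ∘ headIncl m n) := Matrix.ext fun i j => (hGram i j).symm
  have hδ₀ : 0 < δ₀ := (lt_inf'_iff _).2 fun k _ => hδhead k ▸ (hδ k).1
  have habar_le {k k' : ℕ} (r : ℝ) (hr : 0 < r) (hr2 : r ≤ 2) (hk : k ≤ k') :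
      abar k' ≤ abar k * r ^ k * r⁻¹ ^ k' :=
    le_mul_pow_mul_inv_pow_of_le_mul (fun k => (habar k).le) hr (by nlinarith [hε.1, hε.2]) hdec hk
  have ha0 (i : (k : ℕ) × Fin (m k)) : 0 ≤ a i := (mul_pos (habar _) (hδ _).1).le.trans (ha i).1
  have haS : Summable a := (hw.mul_left (abar 0)).of_nonneg_of_le ha0 fun i =>
    (ha i).2.trans ((habar_le 2 two_pos le_rfl i.1.zero_le).trans_eq (by simp))
  have hv_le (i : (k : ℕ) × Fin (m k)) : ‖v i‖ ≤ 1 := (hv i).le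
  constructor
  · rw [if_pos hδ₀, div_mul_eq_mul_div, mul_comm δ₀, hG]
    refine div_le_nthEig_rankOneSum_block haS hv_le ha0 hli (mul_pos (habar n) hδ₀).le
      (fun i hi => ?_) l
    calc abar n * δ₀ ≤ abar i.1 * δlow i.1 := by
          refine mul_le_mul (by simpa using habar_le 1 one_pos one_le_two hi) ?_ hδ₀.le (habar _).le
          exact (inf'_le _ (mem_univ _)).trans_eq (hδhead ⟨i.1, by omega⟩).symm
      _ ≤ a i := (ha i).1
  · refine (nthEig_rankOneSum_block_le haS hv_le ha0 (hw.mul_left (abar n * 2 ^ n))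
      (fun _ => mul_nonneg (mul_nonneg (habar n).le (by positivity)) (by positivity))
      (fun i hi => (ha i).2.trans (habar_le 2 two_pos le_rfl hi)) l).trans_eq ?_
    rw [tsum_mul_left]
    ring
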